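/- arXiv:math/0010010 — 3 statements merged into one kernel-verified Lean document; each statement's English description precedes it below -/
import Mathlib

section
/- Let 0 < p ≤ 1 and Ω = (Ω_n)_n positive. The associate space of d(Ω,p) equals ℓ^∞ (with equivalent norms) if and only if there is C > 0 with Σ_{k=0}^n Ω_k ≥ C (n+1)^p for all n ≥ 0. Moreover d(Ω,p)' ⊂ ℓ^∞ always holds. -/
open MeasureTheory Set
open scoped ENNReal NNReal

/-- Nonincreasing rearrangement of a sequence (w.r.t. counting measure on ℕ). -/
noncomputable def rearrSeq (f : ℕ → ℝ) (n : ℕ) : ℝ≥0∞ :=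
  sInf {s : ℝ≥0∞ | Measure.count {k : ℕ | s < ENNReal.ofReal |f k|} ≤ (n : ℝ≥0∞)}

/-- The Lorentz sequence space quasi-norm `‖f‖_{d(Ω,p)} = (Σ f*(n)^p Ωₙ)^{1/p}`. -/
noncomputable def dNorm (Ω : ℕ → ℝ) (p : ℝ) (f : ℕ → ℝ) : ℝ≥0∞ :=
  (∑' n, (rearrSeq f n) ^ p * ENNReal.ofReal (Ω n)) ^ (1 / p)

/-- The associate norm `‖f‖_{d(Ω,p)'} = sup{Σ |f(n) g(n)| : ‖g‖_{d(Ω,p)} ≤ 1}`. -/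
noncomputable def assocNorm (Ω : ℕ → ℝ) (p : ℝ) (f : ℕ → ℝ) : ℝ≥0∞ :=
  ⨆ g ∈ {g : ℕ → ℝ | dNorm Ω p g ≤ 1}, ∑' n, ENNReal.ofReal |f n * g n|

lemma rearr_antitone (g : ℕ → ℝ) : Antitone (rearrSeq g) := by
  intro m n h
  apply sInf_le_sInf
  intro s hs
  simp only [mem_setOf_eq] at hs ⊢
  exact le_trans hs (Nat.cast_le.2 h)

lemma rearr_indicator (S : Finset ℕ) {a : ℝ} (ha : 0 < a) (k : ℕ) :
    rearrSeq (fun j => if j ∈ S then a else 0) k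
      = if k < S.card then ENNReal.ofReal a else 0 := by
  have habs : ∀ j, ENNReal.ofReal |if j ∈ S then a else 0| =
      if j ∈ S then ENNReal.ofReal a else 0 := by
    intro j; split <;> simp [abs_of_nonneg ha.le]
  have hset : ∀ s : ℝ≥0∞, {j : ℕ | s < ENNReal.ofReal |if j ∈ S then a else 0|}
      = if s < ENNReal.ofReal a then (S : Set ℕ) else ∅ := by
    intro s
    by_cases h : s < ENNReal.ofReal a
    · rw [if_pos h]
      ext j; simp only [mem_setOf_eq, habs, Finset.mem_coe]
      constructor
      · intro hj; by_contra hjS; simp [hjS] at hj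
      · intro hj; simpa [hj] using h
    · rw [if_neg h]
      ext j; simp only [mem_setOf_eq, habs, mem_empty_iff_false, iff_false]
      by_cases hj : j ∈ S
      · simpa [hj] using h
      · simp [hj]
  by_cases hk : k < S.card
  · rw [if_pos hk]
    apply le_antisymm
    · apply sInf_le
      show Measure.count _ ≤ _
      rw [hset, if_neg (lt_irrefl _)]
      simp
    · apply le_sInf
      intro s hs
      by_contra hlt
      push_neg at hlt
      have h2 : Measure.count {j : ℕ | s < ENNReal.ofReal |if j ∈ S then a else 0|}
          ≤ (k : ℝ≥0∞) := hs
      rw [hset, if_pos hlt, Measure.count_apply_finset] at h2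
      exact absurd (Nat.cast_le.1 h2) (not_le.2 hk)
  · rw [if_neg hk]
    apply le_antisymm _ zero_le
    apply sInf_le
    show Measure.count _ ≤ _
    rw [hset]
    by_cases h : (0:ℝ≥0∞) < ENNReal.ofReal a
    · rw [if_pos h, Measure.count_apply_finset]
      exact Nat.cast_le.2 (not_lt.1 hk)
    · rw [if_neg h]; simp

lemma sum_le_rearr (g : ℕ → ℝ) (F : Finset ℕ) :
    ∑ j ∈ F, ENNReal.ofReal |g j| ≤ ∑ k ∈ Finset.range F.card, rearrSeq g k := by
  induction F using Finset.strongInduction with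
  | _ F ih =>
    rcases F.eq_empty_or_nonempty with rfl | hne
    · simp
    obtain ⟨j₀, hj₀F, hj₀min⟩ := F.exists_min_image (fun j => |g j|) hne
    have h1 : 1 ≤ F.card := Finset.card_pos.2 hne
    have hcard : F.card = (F.erase j₀).card + 1 := by
      rw [Finset.card_erase_of_mem hj₀F]; omega
    have hkey : ENNReal.ofReal |g j₀| ≤ rearrSeq g (F.card - 1) := by
      apply le_sInf
      intro s hs
      simp only [mem_setOf_eq] at hs
      by_contra hlt
      push_neg at hlt
      have hsub : (F : Set ℕ) ⊆ {k : ℕ | s < ENNReal.ofReal |g k|} := by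
        intro j hj
        simp only [mem_setOf_eq]
        exact lt_of_lt_of_le hlt (ENNReal.ofReal_le_ofReal (hj₀min j hj))
      have : (F.card : ℝ≥0∞) ≤ (F.card - 1 : ℕ) := by
        calc (F.card : ℝ≥0∞) = Measure.count (F : Set ℕ) :=
              (Measure.count_apply_finset F).symm
          _ ≤ Measure.count {k : ℕ | s < ENNReal.ofReal |g k|} := measure_mono hsub
          _ ≤ ((F.card - 1 : ℕ) : ℝ≥0∞) := hs
      have h2 := Nat.cast_le.1 this
      have h3 : 1 ≤ F.card := Finset.card_pos.2 hne
      omega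
    calc ∑ j ∈ F, ENNReal.ofReal |g j|
        = ∑ j ∈ F.erase j₀, ENNReal.ofReal |g j| + ENNReal.ofReal |g j₀| := by
          rw [Finset.sum_erase_add _ _ hj₀F]
      _ ≤ ∑ k ∈ Finset.range (F.erase j₀).card, rearrSeq g k + rearrSeq g (F.card - 1) := by
          exact add_le_add (ih _ (Finset.erase_ssubset hj₀F)) hkey
      _ = ∑ k ∈ Finset.range F.card, rearrSeq g k := by
          rw [hcard, Finset.sum_range_succ, Nat.add_sub_cancel]

lemma concave_key {p a b t : ℝ} (hp0 : 0 < p) (hp1 : p ≤ 1) (ha : 0 ≤ a) (hb : 0 ≤ b)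
    (hbt : b ≤ t) : (t + a) ^ p + b ^ p ≤ t ^ p + (b + a) ^ p := by
  have ht : 0 ≤ t := le_trans hb hbt
  rcases eq_or_lt_of_le (by linarith : b ≤ t + a) with heq | hlt
  · have h1 : a = 0 := by linarith
    have h2 : t = b := by linarith
    rw [h1, h2]; ring_nf; exact le_refl _
  have hD : 0 < t + a - b := by linarith
  set l : ℝ := (t - b) / (t + a - b) with hl
  have hl0 : 0 ≤ l := div_nonneg (by linarith) hD.le
  have hl1 : l ≤ 1 := (div_le_one hD).2 (by linarith)
  have hlmul : l * (t + a - b) = t - b := div_mul_cancel₀ _ hD.ne'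
  have hcc := Real.concaveOn_rpow hp0.le hp1
  have hx : (t + a) ∈ Ici (0:ℝ) := by simp only [mem_Ici]; linarith
  have hy : b ∈ Ici (0:ℝ) := hb
  have e1 : l * (t + a) + (1 - l) * b = t := by linear_combination hlmul
  have e2 : (1 - l) * (t + a) + l * b = b + a := by linear_combination -hlmul
  have c1 := hcc.2 hx hy hl0 (by linarith : (0:ℝ) ≤ 1 - l) (by ring)
  have c2 := hcc.2 hx hy (by linarith : (0:ℝ) ≤ 1 - l) hl0 (by ring)
  simp only [smul_eq_mul] at c1 c2
  rw [e1] at c1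
  rw [e2] at c2
  linarith

lemma hardy_step {p : ℝ} (hp0 : 0 < p) (hp1 : p ≤ 1) (α : ℕ → ℝ)
    (hnn : ∀ k, 0 ≤ α k) (hanti : ∀ k, α (k+1) ≤ α k) (n : ℕ) :
    (∑ k ∈ Finset.range (n+1), α k) ^ p
      ≤ ∑ k ∈ Finset.range (n+1), (α k) ^ p * (((k:ℝ)+1) ^ p - (k:ℝ) ^ p) := by
  have hantile : Antitone α := antitone_nat_of_succ_le hanti
  induction n with
  | zero =>
    simp [Real.zero_rpow hp0.ne', Real.one_rpow]
  | succ n ih =>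
    set T := ∑ k ∈ Finset.range (n+1), α k with hT
    set a := α (n+1) with hadef
    have ha : 0 ≤ a := hnn _
    have hTnn : 0 ≤ T := Finset.sum_nonneg fun i _ => hnn i
    have hb : ((n:ℝ)+1) * a ≤ T := by
      have h1 : ∀ i ∈ Finset.range (n+1), a ≤ α i := fun i hi =>
        hantile (Nat.le_of_lt_succ (Finset.mem_range.1 hi)).step
      have h2 := Finset.card_nsmul_le_sum (Finset.range (n+1)) α a h1
      rw [Finset.card_range, nsmul_eq_mul] at h2
      push_cast at h2
      linarith
    have hkey := concave_key hp0 hp1 ha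
      (mul_nonneg (by positivity) ha) hb
    have hmul1 : (((n:ℝ)+1) * a) ^ p = ((n:ℝ)+1) ^ p * a ^ p :=
      Real.mul_rpow (by positivity) ha
    have hmul2 : (((n:ℝ)+1) * a + a) ^ p = ((n:ℝ)+2) ^ p * a ^ p := by
      rw [show ((n:ℝ)+1) * a + a = ((n:ℝ)+2) * a by ring]
      exact Real.mul_rpow (by positivity) ha
    rw [hmul1, hmul2] at hkey
    rw [Finset.sum_range_succ, Finset.sum_range_succ (fun k => (α k) ^ p * _)]
    push_cast
    rw [show ((n:ℝ)+1+1) = (n:ℝ)+2 from by ring, ← hT, ← hadef]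
    linarith [hkey, ih]

lemma abel_step {p C : ℝ} (hp0 : 0 < p) (hC : 0 < C) (Ω β : ℕ → ℝ)
    (hβnn : ∀ k, 0 ≤ β k) (hβanti : ∀ k, β (k+1) ≤ β k)
    (hW : ∀ n : ℕ, C * ((n:ℝ)+1) ^ p ≤ ∑ k ∈ Finset.range (n+1), Ω k) (n : ℕ) :
    C * ∑ k ∈ Finset.range (n+1), β k * (((k:ℝ)+1) ^ p - (k:ℝ) ^ p)
      + β n * ((∑ k ∈ Finset.range (n+1), Ω k) - C * ((n:ℝ)+1) ^ p)
      ≤ ∑ k ∈ Finset.range (n+1), β k * Ω k := by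
  induction n with
  | zero =>
    simp only [Finset.sum_range_one, Nat.cast_zero, zero_add,
      Real.one_rpow, Real.zero_rpow hp0.ne']
    apply le_of_eq; ring
  | succ n ih =>
    have hWn := hW n
    have hprod : 0 ≤ (β n - β (n+1)) * ((∑ k ∈ Finset.range (n+1), Ω k) - C * ((n:ℝ)+1) ^ p) :=
      mul_nonneg (sub_nonneg.2 (hβanti n)) (sub_nonneg.2 hWn)
    rw [Finset.sum_range_succ, Finset.sum_range_succ (fun k => β k * Ω k),
      Finset.sum_range_succ (fun k => Ω k)]
    push_cast
    rw [show ((n:ℝ)+1+1) = (n:ℝ)+2 from by ring]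
    push_cast at ih
    nlinarith [ih, hprod]

lemma dNorm_indicator (Ω : ℕ → ℝ) (hΩ : ∀ n, 0 < Ω n) {p : ℝ} (hp0 : 0 < p) (S : Finset ℕ) {a : ℝ} (ha : 0 < a) :
    dNorm Ω p (fun j => if j ∈ S then a else 0)
      = (ENNReal.ofReal (a ^ p * ∑ k ∈ Finset.range S.card, Ω k)) ^ (1/p) := by
  unfold dNorm
  congr 1
  rw [tsum_eq_sum (s := Finset.range S.card) (by
    intro k hk
    rw [rearr_indicator S ha, if_neg (by simpa using hk),
      ENNReal.zero_rpow_of_pos hp0, zero_mul])]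
  have : ∀ k ∈ Finset.range S.card,
      (rearrSeq (fun j => if j ∈ S then a else 0) k) ^ p * ENNReal.ofReal (Ω k)
        = ENNReal.ofReal (a ^ p * Ω k) := by
    intro k hk
    rw [rearr_indicator S ha, if_pos (Finset.mem_range.1 hk),
      ENNReal.ofReal_rpow_of_pos ha, ← ENNReal.ofReal_mul (by positivity)]
  rw [Finset.sum_congr rfl this, ← ENNReal.ofReal_sum_of_nonneg
    (fun k _ => mul_nonneg (by positivity) (hΩ k).le), ← Finset.mul_sum]

lemma l1_bound {p C : ℝ} (hp0 : 0 < p) (hp1 : p ≤ 1) (hC : 0 < C)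
    (Ω : ℕ → ℝ) (hΩ : ∀ n, 0 < Ω n)
    (hW : ∀ n : ℕ, C * ((n:ℝ)+1) ^ p ≤ ∑ k ∈ Finset.range (n+1), Ω k)
    (g : ℕ → ℝ) (hg : dNorm Ω p g ≤ 1) :
    ∑' n, ENNReal.ofReal |g n| ≤ ENNReal.ofReal ((1/C) ^ (1/p)) := by
  set S := ∑' n, (rearrSeq g n) ^ p * ENNReal.ofReal (Ω n) with hSdef
  have hS : S ≤ 1 := by
    have h1 := ENNReal.rpow_le_rpow hg hp0.le
    rw [ENNReal.one_rpow] at h1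
    calc S = (S ^ (1/p)) ^ p := by
            rw [← ENNReal.rpow_mul, one_div_mul_cancel hp0.ne', ENNReal.rpow_one]
      _ ≤ 1 := h1
  have hfin : ∀ k, rearrSeq g k ≠ ⊤ := by
    intro k hk
    have h1 : (rearrSeq g k) ^ p * ENNReal.ofReal (Ω k) ≤ S :=
      ENNReal.le_tsum k
    rw [hk, ENNReal.top_rpow_of_pos hp0,
      ENNReal.top_mul (ENNReal.ofReal_pos.2 (hΩ k)).ne'] at h1
    exact (lt_irrefl _ (lt_of_le_of_lt (h1.trans hS) ENNReal.one_lt_top)).elim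
  set α : ℕ → ℝ := fun k => (rearrSeq g k).toReal with hα
  have hαnn : ∀ k, 0 ≤ α k := fun k => ENNReal.toReal_nonneg
  have hαanti : ∀ k, α (k+1) ≤ α k := fun k =>
    (ENNReal.toReal_le_toReal (hfin _) (hfin _)).2 (rearr_antitone g (Nat.le_succ k))
  have hsumΩ : ∀ n : ℕ, ∑ k ∈ Finset.range (n+1), (α k) ^ p * Ω k ≤ 1 := by
    intro n
    have h1 : ∑ k ∈ Finset.range (n+1), (rearrSeq g k) ^ p * ENNReal.ofReal (Ω k) ≤ 1 :=
      le_trans (ENNReal.sum_le_tsum _) hS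
    have h2 : ∀ k ∈ Finset.range (n+1),
        (α k) ^ p * Ω k = ((rearrSeq g k) ^ p * ENNReal.ofReal (Ω k)).toReal := by
      intro k _
      rw [ENNReal.toReal_mul, ENNReal.toReal_ofReal (hΩ k).le, ← ENNReal.toReal_rpow]
    rw [Finset.sum_congr rfl h2, ← ENNReal.toReal_sum (fun k _ =>
      ENNReal.mul_ne_top (ENNReal.rpow_ne_top_of_nonneg hp0.le (hfin k))
        ENNReal.ofReal_ne_top)]
    calc (∑ k ∈ Finset.range (n+1), (rearrSeq g k) ^ p * ENNReal.ofReal (Ω k)).toReal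
        ≤ (1 : ℝ≥0∞).toReal := ENNReal.toReal_mono ENNReal.one_ne_top h1
      _ = 1 := ENNReal.toReal_one
  have hsum : ∀ n : ℕ, ∑ k ∈ Finset.range (n+1), α k ≤ (1/C) ^ (1/p) := by
    intro n
    set β : ℕ → ℝ := fun k => (α k) ^ p with hβ
    have hβnn : ∀ k, 0 ≤ β k := fun k => Real.rpow_nonneg (hαnn k) p
    have hβanti : ∀ k, β (k+1) ≤ β k := fun k =>
      Real.rpow_le_rpow (hαnn _) (hαanti k) hp0.le
    have h1 := hardy_step hp0 hp1 α hαnn hαanti n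
    have h2 := abel_step hp0 hC Ω β hβnn hβanti hW n
    have h3 : 0 ≤ β n * ((∑ k ∈ Finset.range (n+1), Ω k) - C * ((n:ℝ)+1) ^ p) :=
      mul_nonneg (hβnn n) (sub_nonneg.2 (hW n))
    have h4 : ∑ k ∈ Finset.range (n+1), β k * Ω k ≤ 1 := hsumΩ n
    have h5 : C * (∑ k ∈ Finset.range (n+1), α k) ^ p ≤ 1 := by nlinarith
    have h6 : (∑ k ∈ Finset.range (n+1), α k) ^ p ≤ 1/C := by
      rw [le_div_iff₀ hC]; linarith
    have h7 : 0 ≤ ∑ k ∈ Finset.range (n+1), α k := Finset.sum_nonneg fun i _ => hαnn i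
    calc ∑ k ∈ Finset.range (n+1), α k
        = ((∑ k ∈ Finset.range (n+1), α k) ^ p) ^ (1/p) := by
          rw [← Real.rpow_mul h7, mul_one_div_cancel hp0.ne', Real.rpow_one]
      _ ≤ (1/C) ^ (1/p) := Real.rpow_le_rpow (by positivity) h6 (by positivity)
  have hrange : ∀ m : ℕ, ∑ k ∈ Finset.range m, rearrSeq g k ≤ ENNReal.ofReal ((1/C) ^ (1/p)) := by
    intro m
    cases m with
    | zero => simp
    | succ n =>
      have h1 : ∀ k ∈ Finset.range (n+1), rearrSeq g k = ENNReal.ofReal (α k) := by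
        intro k _
        rw [hα]
        exact (ENNReal.ofReal_toReal (hfin k)).symm
      rw [Finset.sum_congr rfl h1, ← ENNReal.ofReal_sum_of_nonneg (fun k _ => hαnn k)]
      exact ENNReal.ofReal_le_ofReal (hsum n)
  rw [ENNReal.tsum_eq_iSup_sum]
  exact iSup_le fun F => le_trans (sum_le_rearr g F) (hrange F.card)

-- dNorm of the normalized indicator of a set with card n+1 is 1
lemma dNorm_normalized (Ω : ℕ → ℝ) (hΩ : ∀ n, 0 < Ω n) {p : ℝ} (hp0 : 0 < p)
    (S : Finset ℕ) (n : ℕ) (hcard : S.card = n + 1) :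
    dNorm Ω p (fun j => if j ∈ S then (∑ k ∈ Finset.range (n+1), Ω k) ^ (-(1/p)) else 0)
      = 1 := by
  have hWpos : 0 < ∑ k ∈ Finset.range (n+1), Ω k :=
    Finset.sum_pos (fun k _ => hΩ k) ⟨0, by simp⟩
  set W := ∑ k ∈ Finset.range (n+1), Ω k with hWdef
  have ha : 0 < W ^ (-(1/p)) := Real.rpow_pos_of_pos hWpos _
  rw [dNorm_indicator Ω hΩ hp0 S ha, hcard, ← hWdef]
  have h1 : (W ^ (-(1/p))) ^ p = W⁻¹ := by
    rw [← Real.rpow_mul hWpos.le, neg_mul, one_div_mul_cancel hp0.ne',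
      Real.rpow_neg_one]
  rw [h1, inv_mul_cancel₀ hWpos.ne', ENNReal.ofReal_one, ENNReal.one_rpow]

-- tsum of |f * indicator| equals finite sum
lemma tsum_mul_indicator (f : ℕ → ℝ) (S : Finset ℕ) (a : ℝ) :
    ∑' j, ENNReal.ofReal |f j * (if j ∈ S then a else 0)|
      = ∑ j ∈ S, ENNReal.ofReal |f j * a| := by
  rw [tsum_eq_sum (s := S) (by intro j hj; simp [hj])]
  exact Finset.sum_congr rfl fun j hj => by simp [hj]

/-- For `0 < p ≤ 1`: `d(Ω,p)' ⊆ ℓ^∞` always holds, and `d(Ω,p)' = ℓ^∞` with equivalent norms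
iff there is `C > 0` with `Σ_{k≤n} Ω_k ≥ C (n+1)^p` for all `n`. -/
theorem stmt14 (p : ℝ) (hp0 : 0 < p) (hp1 : p ≤ 1) (Ω : ℕ → ℝ) (hΩ : ∀ n, 0 < Ω n) :
    (∃ cinc : ℝ≥0, ∀ f : ℕ → ℝ,
        (⨆ n : ℕ, ENNReal.ofReal |f n|) ≤ cinc * assocNorm Ω p f) ∧
    ((∃ c₁ c₂ : ℝ≥0, ∀ f : ℕ → ℝ,
        assocNorm Ω p f ≤ c₁ * (⨆ n : ℕ, ENNReal.ofReal |f n|) ∧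
        (⨆ n : ℕ, ENNReal.ofReal |f n|) ≤ c₂ * assocNorm Ω p f) ↔
      ∃ C : ℝ, 0 < C ∧ ∀ n : ℕ,
        C * ((n : ℝ) + 1) ^ p ≤ ∑ k ∈ Finset.range (n + 1), Ω k) := by
  -- Part 1 : the inclusion into ℓ∞
  have part1 : ∀ f : ℕ → ℝ,
      (⨆ n : ℕ, ENNReal.ofReal |f n|)
        ≤ ENNReal.ofReal ((Ω 0) ^ (1/p)) * assocNorm Ω p f := by
    intro f
    apply iSup_le
    intro m
    set a₀ : ℝ := (Ω 0) ^ (-(1/p)) with ha₀def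
    have ha₀ : 0 < a₀ := Real.rpow_pos_of_pos (hΩ 0) _
    set g : ℕ → ℝ := fun j => if j ∈ ({m} : Finset ℕ) then a₀ else 0 with hgdef
    have hgnorm : dNorm Ω p g = 1 := by
      have h0 : (∑ k ∈ Finset.range 1, Ω k) = Ω 0 := Finset.sum_range_one (f := Ω)
      have := dNorm_normalized Ω hΩ hp0 ({m} : Finset ℕ) 0 (Finset.card_singleton m)
      rw [h0] at this
      exact this
    have hglb : ∑' j, ENNReal.ofReal |f j * g j| ≤ assocNorm Ω p f :=
      le_iSup₂ (f := fun (g : ℕ → ℝ) (_ : g ∈ {g : ℕ → ℝ | dNorm Ω p g ≤ 1}) =>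
        ∑' j, ENNReal.ofReal |f j * g j|) g (le_of_eq hgnorm)
    have hsum : ∑' j, ENNReal.ofReal |f j * g j| = ENNReal.ofReal (|f m| * a₀) := by
      rw [hgdef, tsum_mul_indicator f ({m} : Finset ℕ) a₀]
      simp [abs_mul, abs_of_pos ha₀]
    calc ENNReal.ofReal |f m|
        = ENNReal.ofReal ((Ω 0) ^ (1/p)) * ENNReal.ofReal (|f m| * a₀) := by
          rw [← ENNReal.ofReal_mul (Real.rpow_nonneg (hΩ 0).le _)]
          congr 1
          rw [ha₀def, show (Ω 0) ^ (1/p) * (|f m| * (Ω 0) ^ (-(1/p)))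
            = |f m| * ((Ω 0) ^ (1/p) * (Ω 0) ^ (-(1/p))) from by ring,
            ← Real.rpow_add (hΩ 0), add_neg_cancel, Real.rpow_zero, mul_one]
      _ ≤ ENNReal.ofReal ((Ω 0) ^ (1/p)) * assocNorm Ω p f := by
          rw [← hsum] at *
          exact mul_le_mul_right hglb _
  refine ⟨⟨((Ω 0) ^ (1/p)).toNNReal, fun f => ?_⟩, ?_, ?_⟩
  · exact part1 f
  · -- forward direction
    rintro ⟨c₁, c₂, h⟩
    -- c₁ > 0
    have hc₁pos : 0 < (c₁ : ℝ) := by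
      by_contra hc
      push_neg at hc
      have hc0 : c₁ = 0 := by
        ext1; exact le_antisymm (by exact_mod_cast hc) c₁.coe_nonneg
      have h1 := (h (fun _ => 1)).1
      have h2 := (h (fun _ => 1)).2
      rw [hc0] at h1
      simp only [ENNReal.coe_zero, zero_mul, le_zero_iff] at h1
      rw [h1, mul_zero] at h2
      have : (1 : ℝ≥0∞) ≤ 0 := by
        refine le_trans ?_ h2
        have := le_iSup (fun n : ℕ => ENNReal.ofReal |(1:ℝ)|) 0
        simpa using this
      simp at this
    refine ⟨1 / (c₁:ℝ) ^ p, by positivity, fun n => ?_⟩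
    set W := ∑ k ∈ Finset.range (n+1), Ω k with hWdef
    have hWpos : 0 < W := Finset.sum_pos (fun k _ => hΩ k) ⟨0, by simp⟩
    set a : ℝ := W ^ (-(1/p)) with hadef
    have ha : 0 < a := Real.rpow_pos_of_pos hWpos _
    set f : ℕ → ℝ := fun j => if j ∈ Finset.range (n+1) then (1:ℝ) else 0 with hfdef
    set g : ℕ → ℝ := fun j => if j ∈ Finset.range (n+1) then a else 0 with hgdef
    have hgnorm : dNorm Ω p g = 1 := by
      have := dNorm_normalized Ω hΩ hp0 (Finset.range (n+1)) n (Finset.card_range _)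
      rw [hgdef, hadef, hWdef]
      exact this
    have hglb : ∑' j, ENNReal.ofReal |f j * g j| ≤ assocNorm Ω p f :=
      le_iSup₂ (f := fun (g : ℕ → ℝ) (_ : g ∈ {g : ℕ → ℝ | dNorm Ω p g ≤ 1}) =>
        ∑' j, ENNReal.ofReal |f j * g j|) g (le_of_eq hgnorm)
    have hsum : ∑' j, ENNReal.ofReal |f j * g j|
        = (n+1 : ℕ) * ENNReal.ofReal a := by
      rw [hgdef, tsum_mul_indicator f (Finset.range (n+1)) a]
      have : ∀ j ∈ Finset.range (n+1), ENNReal.ofReal |f j * a| = ENNReal.ofReal a := by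
        intro j hj
        rw [hfdef]
        simp only [hj, if_true, one_mul]
        rw [abs_of_pos ha]
      rw [Finset.sum_congr rfl this, Finset.sum_const, Finset.card_range, nsmul_eq_mul]
    have hfsup : (⨆ m : ℕ, ENNReal.ofReal |f m|) ≤ 1 := by
      apply iSup_le
      intro m
      rw [hfdef]
      by_cases hm : m ∈ Finset.range (n+1) <;> simp [hm]
    have hchain : ((n+1 : ℕ) : ℝ≥0∞) * ENNReal.ofReal a ≤ (c₁ : ℝ≥0∞) := by
      rw [← hsum]
      calc ∑' j, ENNReal.ofReal |f j * g j| ≤ assocNorm Ω p f := hglb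
        _ ≤ c₁ * (⨆ m : ℕ, ENNReal.ofReal |f m|) := (h f).1
        _ ≤ c₁ * 1 := mul_le_mul_right hfsup _
        _ = c₁ := mul_one _
    have hreal : ((n:ℝ)+1) * a ≤ (c₁ : ℝ) := by
      have h1 : ENNReal.ofReal (((n:ℝ)+1) * a) ≤ ENNReal.ofReal (c₁:ℝ) := by
        rw [ENNReal.ofReal_mul (by positivity), ENNReal.ofReal_coe_nnreal]
        convert hchain using 2
        rw [← ENNReal.ofReal_natCast (n+1)]
        push_cast
        ring_nf
      rw [ENNReal.ofReal_le_ofReal_iff c₁.coe_nonneg] at h1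
      exact h1
    -- now : (n+1) ≤ c₁ * W^{1/p}, raise to p
    have haW : a * W ^ (1/p) = 1 := by
      rw [hadef, ← Real.rpow_add hWpos, neg_add_cancel, Real.rpow_zero]
    have h2 : ((n:ℝ)+1) ≤ (c₁:ℝ) * W ^ (1/p) := by
      have := mul_le_mul_of_nonneg_right hreal (Real.rpow_nonneg hWpos.le (1/p))
      calc ((n:ℝ)+1) = ((n:ℝ)+1) * (a * W ^ (1/p)) := by rw [haW, mul_one]
        _ = ((n:ℝ)+1) * a * W ^ (1/p) := by ring
        _ ≤ (c₁:ℝ) * W ^ (1/p) := this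
    have h3 : ((n:ℝ)+1) ^ p ≤ (c₁:ℝ) ^ p * W := by
      have := Real.rpow_le_rpow (by positivity) h2 hp0.le
      rwa [Real.mul_rpow c₁.coe_nonneg (Real.rpow_nonneg hWpos.le _),
        ← Real.rpow_mul hWpos.le, one_div_mul_cancel hp0.ne', Real.rpow_one] at this
    have hc₁p : 0 < (c₁:ℝ) ^ p := Real.rpow_pos_of_pos hc₁pos p
    rw [div_mul_eq_mul_div, one_mul, div_le_iff₀ hc₁p]
    linarith [h3]
  · -- backward direction
    rintro ⟨C, hC, hW⟩
    refine ⟨((1/C) ^ (1/p)).toNNReal, ((Ω 0) ^ (1/p)).toNNReal, fun f => ?_⟩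
    constructor
    · -- assocNorm ≤ c₁ * sup
      have hcoe : (↑(((1/C) ^ (1/p)).toNNReal) : ℝ≥0∞) = ENNReal.ofReal ((1/C) ^ (1/p)) := rfl
      rw [hcoe]
      apply iSup₂_le
      intro g hg
      set M := ⨆ m : ℕ, ENNReal.ofReal |f m| with hM
      calc ∑' j, ENNReal.ofReal |f j * g j|
          ≤ ∑' j, M * ENNReal.ofReal |g j| := by
            apply ENNReal.tsum_le_tsum
            intro j
            rw [abs_mul, ENNReal.ofReal_mul (abs_nonneg _)]
            exact mul_le_mul_left (le_iSup (fun m => ENNReal.ofReal |f m|) j) _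
        _ = M * ∑' j, ENNReal.ofReal |g j| := ENNReal.tsum_mul_left
        _ ≤ M * ENNReal.ofReal ((1/C) ^ (1/p)) :=
            mul_le_mul_right (l1_bound hp0 hp1 hC Ω hΩ hW g hg) _
        _ = ENNReal.ofReal ((1/C) ^ (1/p)) * M := mul_comm _ _
    · exact part1 f
end

section
/- Let 1 ≤ p < ∞ and Ω = (Ω_n)_{n≥0} ⊂ [0,∞). The functional ‖f‖_{d(Ω,p)} = (Σ_{n=0}^∞ f*(n)^p Ω_n)^{1/p} satisfies the triangle inequality for all complex sequences f only if Ω is nonincreasing; conversely, if Ω is nonincreasing it is a norm. -/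
open MeasureTheory Set
open scoped ENNReal NNReal

/-- Nonincreasing rearrangement of a complex sequence (w.r.t. counting measure on ℕ). -/
noncomputable def rearrSeqC (f : ℕ → ℂ) (n : ℕ) : ℝ≥0∞ :=
  sInf {s : ℝ≥0∞ | Measure.count {k : ℕ | s < ENNReal.ofReal ‖f k‖} ≤ (n : ℝ≥0∞)}

/-- The Lorentz sequence space functional `‖f‖_{d(Ω,p)} = (Σ f*(n)^p Ωₙ)^{1/p}`. -/
noncomputable def dNormC (Ω : ℕ → ℝ) (p : ℝ) (f : ℕ → ℂ) : ℝ≥0∞ :=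
  (∑' n, (rearrSeqC f n) ^ p * ENNReal.ofReal (Ω n)) ^ (1 / p)

/-!
Write `a*` for the nonincreasing rearrangement of `a : ℕ → ℝ≥0∞`. For `k` injective the partial
sums of `a ∘ k` are dominated by those of `a*`, hence by Hardy's lemma so are the sums weighted by
any nonincreasing `w`; conversely a greedy matching realises `a*(0), …, a*(N-1)` along an injective
`k` up to any factor `θ < 1`. Thus `∑ a*(j) w j = ⨆ (N, k injective), ∑_{j<N} a (k j) w j`, and
`‖·‖_{d(Ω,p)}` is a supremum of weighted finite `ℓ^p`-norms, each of which is homogeneous and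
satisfies Minkowski's inequality.

Conversely, let `u = (1, …, 1, t, 0, …)` with `n + 1` ones and `u'` the copy of `u` with the entries
`n` and `n + 1` swapped. Then `u* = u'* = u` while `u + u' = (2, …, 2, 1 + t, 1 + t, 0, …)`, and
the triangle inequality for `u, u'` reads `((1+t)^p - (2t)^p) Ω (n+1) ≤ (2^p - (1+t)^p) Ω n`.
Both differences are `p 2^(p-1) (1 - t) + o(1 - t)`, so `t → 1` gives `Ω (n+1) ≤ Ω n`.
-/

lemma sum_range_mul_le_of_sum_range_le {x y w : ℕ → ℝ≥0∞} (hw : Antitone w) {N : ℕ}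
    (h : ∀ m ≤ N, ∑ j ∈ Finset.range m, x j ≤ ∑ j ∈ Finset.range m, y j) :
    ∑ j ∈ Finset.range N, x j * w j ≤ ∑ j ∈ Finset.range N, y j * w j := by
  induction N generalizing w with
  | zero => simp
  | succ N ih =>
    -- Peel off the constant weight `w N`; what is left is antitone and vanishes at `N`.
    have hsplit : ∀ z : ℕ → ℝ≥0∞, ∑ j ∈ Finset.range (N + 1), z j * w j =
        ∑ j ∈ Finset.range N, z j * (w j - w N) + (∑ j ∈ Finset.range (N + 1), z j) * w N := by
      intro z
      rw [Finset.sum_mul, Finset.sum_range_succ, Finset.sum_range_succ, ← add_assoc,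
        ← Finset.sum_add_distrib]
      congr 1
      refine Finset.sum_congr rfl fun j hj => ?_
      rw [← mul_add, tsub_add_cancel_of_le (hw (Finset.mem_range.1 hj).le)]
    rw [hsplit x, hsplit y]
    exact add_le_add (ih (fun _ _ hij => tsub_le_tsub_right (hw hij) _) fun m hm => h m (by omega))
      (mul_le_mul_left (h (N + 1) le_rfl) _)

lemma exists_injOn_Iio_mem {A : ℕ → Set ℕ} (N : ℕ)
    (h : ∀ j < N, (j : ℝ≥0∞) < Measure.count (A j)) :
    ∃ k : ℕ → ℕ, InjOn k (Iio N) ∧ ∀ j < N, k j ∈ A j := by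
  induction N with
  | zero => exact ⟨id, injOn_id _, fun j hj => absurd hj (Nat.not_lt_zero j)⟩
  | succ N ih =>
    obtain ⟨k, hk, hkA⟩ := ih fun j hj => h j (by omega)
    obtain ⟨x, hxA, hxk⟩ : (A N \ k '' Iio N).Nonempty := by
      rw [nonempty_iff_ne_empty, Ne, sdiff_eq_empty]
      intro hsub
      refine (h N (by omega)).not_ge ?_
      calc Measure.count (A N) ≤ Measure.count ((Finset.range N).image k : Set ℕ) :=
            measure_mono (by simpa using hsub)
        _ ≤ N := by
          rw [Measure.count_apply_finset]
          exact Nat.cast_le.2 (Finset.card_image_le.trans (Finset.card_range N).le)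
    have heq : EqOn (Function.update k N x) k (Iio N) := fun j hj => Function.update_of_ne hj.ne _ _
    refine ⟨Function.update k N x, ?_, fun j hj => ?_⟩
    · rw [Iio_add_one_eq_Iic, ← Iio_insert, injOn_insert (s := Iio N) (lt_irrefl N), heq.image_eq,
        Function.update_self]
      exact ⟨hk.congr heq.symm, hxk⟩
    · rcases Nat.lt_succ_iff_lt_or_eq.1 hj with hj | rfl
      · rw [heq hj]; exact hkA j hj
      · rw [Function.update_self]; exact hxA

noncomputable def rearr (a : ℕ → ℝ≥0∞) (n : ℕ) : ℝ≥0∞ :=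
  sInf {s : ℝ≥0∞ | Measure.count {k : ℕ | s < a k} ≤ n}

section Rearrangement

variable {a : ℕ → ℝ≥0∞} {n N : ℕ} {s : ℝ≥0∞}

lemma rearr_le (h : Measure.count {k : ℕ | s < a k} ≤ n) : rearr a n ≤ s := sInf_le h

lemma lt_count_of_lt_rearr (h : s < rearr a n) : (n : ℝ≥0∞) < Measure.count {k : ℕ | s < a k} :=
  lt_of_not_ge fun hc => h.not_ge (rearr_le hc)

lemma le_rearr_of_forall_le {F : Finset ℕ} (hF : ∀ k ∈ F, s ≤ a k) (hn : n < F.card) :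
    s ≤ rearr a n := by
  refine le_sInf fun x (hx : Measure.count _ ≤ _) => not_lt.1 fun hxs => ?_
  have hsub : (F : Set ℕ) ⊆ {k : ℕ | x < a k} := fun k hk => hxs.trans_le (hF k hk)
  have : (F.card : ℝ≥0∞) ≤ n := by
    rw [← Measure.count_apply_finset]
    exact (measure_mono hsub).trans hx
  exact absurd (Nat.cast_le.1 this) (not_le.2 hn)

lemma rearr_antitone_s16 (a : ℕ → ℝ≥0∞) : Antitone (rearr a) :=
  fun _ _ hmn => sInf_le_sInf fun _ (hs : Measure.count _ ≤ _) => le_trans hs (Nat.cast_le.2 hmn)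

lemma rearr_comp_orderIso (e : ℝ≥0∞ ≃o ℝ≥0∞) (a : ℕ → ℝ≥0∞) (n : ℕ) :
    rearr (e ∘ a) n = e (rearr a n) := by
  rw [rearr, rearr, e.map_sInf, ← sInf_image, e.image_eq_preimage_symm]
  congr 1
  ext s
  simp [e.symm_apply_lt]

lemma rearr_comp_equiv (σ : ℕ ≃ ℕ) (a : ℕ → ℝ≥0∞) : rearr (a ∘ σ) = rearr a := by
  funext n
  have h : ∀ s : ℝ≥0∞, {k : ℕ | s < (a ∘ σ) k} = σ.symm '' {k : ℕ | s < a k} := fun s => by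
    rw [σ.image_symm_eq_preimage]; rfl
  simp only [rearr, h, Measure.count_injective_image σ.symm.injective]

lemma rearr_eq_self_of_antitone (ha : Antitone a) : rearr a = a := by
  funext n
  refine le_antisymm (rearr_le ?_) (le_rearr_of_forall_le (F := Finset.range (n + 1)) ?_ ?_)
  · have hsub : {k : ℕ | a n < a k} ⊆ (Finset.range n : Set ℕ) := fun k hk =>
      Finset.mem_coe.2 (Finset.mem_range.2 (lt_of_not_ge fun hnk => (ha hnk).not_gt hk))
    calc Measure.count {k : ℕ | a n < a k} ≤ Measure.count (Finset.range n : Set ℕ) :=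
          measure_mono hsub
      _ = n := by rw [Measure.count_apply_finset, Finset.card_range]
  · exact fun k hk => ha (Nat.lt_succ_iff.1 (Finset.mem_range.1 hk))
  · simp

lemma sum_le_sum_range_rearr (a : ℕ → ℝ≥0∞) (F : Finset ℕ) :
    ∑ k ∈ F, a k ≤ ∑ j ∈ Finset.range F.card, rearr a j := by
  induction F using Finset.strongInduction with
  | _ F ih =>
    rcases F.eq_empty_or_nonempty with rfl | hne
    · simp
    obtain ⟨k₀, hk₀, hmin⟩ := F.exists_min_image a hne
    have hcard : (F.erase k₀).card + 1 = F.card := Finset.card_erase_add_one hk₀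
    calc ∑ k ∈ F, a k = ∑ k ∈ F.erase k₀, a k + a k₀ := (Finset.sum_erase_add F a hk₀).symm
      _ ≤ ∑ j ∈ Finset.range (F.erase k₀).card, rearr a j + rearr a (F.erase k₀).card :=
          add_le_add (ih _ (Finset.erase_ssubset hk₀)) (le_rearr_of_forall_le hmin (by omega))
      _ = ∑ j ∈ Finset.range F.card, rearr a j := by rw [← Finset.sum_range_succ, hcard]

lemma exists_injOn_le_comp {s : ℕ → ℝ≥0∞} (h : ∀ j < N, s j = 0 ∨ s j < rearr a j) :
    ∃ k : ℕ → ℕ, InjOn k (Iio N) ∧ ∀ j < N, s j ≤ a (k j) := by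
  refine exists_injOn_Iio_mem (A := fun j => {i | s j ≤ a i}) N fun j hj => ?_
  rcases h j hj with h0 | hlt
  · simp only [h0, zero_le, ofPred_true, Measure.count_apply_infinite infinite_univ]
    exact ENNReal.natCast_lt_top j
  · exact (lt_count_of_lt_rearr hlt).trans_le (measure_mono fun i (hi : s j < a i) => hi.le)

lemma sum_range_comp_mul_le_sum_range_rearr_mul {w : ℕ → ℝ≥0∞} (hw : Antitone w) {k : ℕ → ℕ}
    (hk : InjOn k (Iio N)) :
    ∑ j ∈ Finset.range N, a (k j) * w j ≤ ∑ j ∈ Finset.range N, rearr a j * w j := by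
  refine sum_range_mul_le_of_sum_range_le hw fun m hm => ?_
  have hkm : InjOn k (Finset.range m) := hk.mono fun j hj => by
    simp only [Finset.coe_range, mem_Iio] at hj ⊢; omega
  calc ∑ j ∈ Finset.range m, a (k j) = ∑ i ∈ (Finset.range m).image k, a i :=
        (Finset.sum_image hkm).symm
    _ ≤ ∑ j ∈ Finset.range ((Finset.range m).image k).card, rearr a j :=
        sum_le_sum_range_rearr a _
    _ = ∑ j ∈ Finset.range m, rearr a j := by
        rw [Finset.card_image_of_injOn hkm, Finset.card_range]

lemma sum_range_rearr_mul_le_iSup (a w : ℕ → ℝ≥0∞) (N : ℕ) :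
    ∑ j ∈ Finset.range N, rearr a j * w j ≤
      ⨆ (M : ℕ) (k : ℕ → ℕ) (_ : InjOn k (Iio M)), ∑ j ∈ Finset.range M, a (k j) * w j := by
  have htrunc : ∑ j ∈ Finset.range N, rearr a j * w j =
      ⨆ M : ℕ, ∑ j ∈ Finset.range N, min (rearr a j) M * w j := by
    rw [← ENNReal.finsetSum_iSup_of_monotone (f := fun j (M : ℕ) => min (rearr a j) M * w j)
      fun j _ _ hMM' => mul_le_mul_left (min_le_min_left _ (Nat.cast_le.2 hMM')) _]
    refine Finset.sum_congr rfl fun j _ => ?_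
    rw [← ENNReal.iSup_mul, ← inf_iSup_eq, ENNReal.iSup_natCast, inf_top_eq]
  rw [htrunc]
  refine iSup_le fun M => ENNReal.le_of_forall_lt_one_mul_le fun θ hθ => ?_
  -- `θ * min (rearr a j) M` is zero or strictly below `rearr a j`, so greedy matching reaches it.
  obtain ⟨k, hk, hle⟩ := exists_injOn_le_comp (a := a) (N := N)
    (s := fun j => θ * min (rearr a j) M) fun j _ => by
      rcases eq_or_ne (min (rearr a j) (M : ℝ≥0∞)) 0 with h0 | h0
      · exact Or.inl (by rw [h0, mul_zero])
      · have hfin : min (rearr a j) (M : ℝ≥0∞) ≠ ∞ :=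
          ne_top_of_le_ne_top (ENNReal.natCast_ne_top M) (min_le_right _ _)
        exact Or.inr (lt_of_lt_of_le
          (by simpa only [one_mul] using (ENNReal.mul_lt_mul_iff_left h0 hfin).2 hθ)
          (min_le_left _ _))
  calc θ * ∑ j ∈ Finset.range N, min (rearr a j) M * w j
      = ∑ j ∈ Finset.range N, θ * min (rearr a j) M * w j := by
        rw [Finset.mul_sum]; simp only [mul_assoc]
    _ ≤ ∑ j ∈ Finset.range N, a (k j) * w j :=
        Finset.sum_le_sum fun j hj => mul_le_mul_left (hle j (Finset.mem_range.1 hj)) _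
    _ ≤ _ := by
        apply le_iSup_of_le N
        exact le_iSup₂_of_le k hk le_rfl

theorem tsum_rearr_mul_eq_iSup {w : ℕ → ℝ≥0∞} (hw : Antitone w) (a : ℕ → ℝ≥0∞) :
    ∑' j, rearr a j * w j =
      ⨆ (N : ℕ) (k : ℕ → ℕ) (_ : InjOn k (Iio N)), ∑ j ∈ Finset.range N, a (k j) * w j := by
  refine le_antisymm ?_ (iSup_le fun N => iSup₂_le fun k hk => ?_)
  · rw [ENNReal.tsum_eq_iSup_nat]
    exact iSup_le (sum_range_rearr_mul_le_iSup a w)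
  · exact (sum_range_comp_mul_le_sum_range_rearr_mul hw hk).trans (ENNReal.sum_le_tsum _)

end Rearrangement

lemma rearrSeqC_eq_rearr (f : ℕ → ℂ) : rearrSeqC f = rearr fun k => ENNReal.ofReal ‖f k‖ := rfl

section WeightedLp

variable {ι : Type*} (s : Finset ι) {p : ℝ}

lemma weighted_Lp_add_le (hp : 1 ≤ p) (x y w : ι → ℝ≥0∞) :
    (∑ i ∈ s, (x i + y i) ^ p * w i) ^ (1 / p) ≤
      (∑ i ∈ s, x i ^ p * w i) ^ (1 / p) + (∑ i ∈ s, y i ^ p * w i) ^ (1 / p) := by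
  have hp0 : 0 < p := by linarith
  have hw : ∀ z : ι → ℝ≥0∞, ∑ i ∈ s, z i ^ p * w i = ∑ i ∈ s, (z i * w i ^ (1 / p)) ^ p :=
    fun z => Finset.sum_congr rfl fun i _ => by
      rw [ENNReal.mul_rpow_of_nonneg _ _ hp0.le, ← ENNReal.rpow_mul, one_div_mul_cancel hp0.ne',
        ENNReal.rpow_one]
  simpa only [hw, add_mul] using ENNReal.Lp_add_le s (fun i => x i * w i ^ (1 / p))
    (fun i => y i * w i ^ (1 / p)) hp

lemma weighted_Lp_const_mul (hp : 0 < p) (c : ℝ≥0∞) (x w : ι → ℝ≥0∞) :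
    (∑ i ∈ s, (c * x i) ^ p * w i) ^ (1 / p) = c * (∑ i ∈ s, x i ^ p * w i) ^ (1 / p) := by
  simp only [ENNReal.mul_rpow_of_nonneg _ _ hp.le, mul_assoc, ← Finset.mul_sum]
  rw [ENNReal.mul_rpow_of_nonneg _ _ (by positivity), ← ENNReal.rpow_mul,
    mul_one_div_cancel hp.ne', ENNReal.rpow_one]

end WeightedLp

section Sufficiency

variable {Ω : ℕ → ℝ} {p : ℝ}

lemma rearrSeqC_rpow (hp : 0 < p) (f : ℕ → ℂ) (n : ℕ) :
    rearrSeqC f n ^ p = rearr (fun k => ENNReal.ofReal ‖f k‖ ^ p) n :=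
  (rearr_comp_orderIso (ENNReal.orderIsoRpow p hp) _ n).symm

lemma iSup_rpow {ι : Sort*} (hp : 0 < p) (x : ι → ℝ≥0∞) : (⨆ i, x i) ^ p = ⨆ i, x i ^ p :=
  (ENNReal.orderIsoRpow p hp).map_iSup x

theorem dNormC_eq_iSup (hp : 0 < p) (hΩ : Antitone Ω) (f : ℕ → ℂ) :
    dNormC Ω p f = ⨆ (N : ℕ) (k : ℕ → ℕ) (_ : InjOn k (Iio N)),
      (∑ j ∈ Finset.range N, ENNReal.ofReal ‖f (k j)‖ ^ p * ENNReal.ofReal (Ω j)) ^ (1 / p) := by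
  have hw : Antitone fun n => ENNReal.ofReal (Ω n) := fun _ _ h => ENNReal.ofReal_le_ofReal (hΩ h)
  simp only [dNormC, rearrSeqC_rpow hp, tsum_rearr_mul_eq_iSup hw, iSup_rpow (one_div_pos.2 hp)]

theorem dNormC_add_le (hp : 1 ≤ p) (hΩ : Antitone Ω) (f g : ℕ → ℂ) :
    dNormC Ω p (f + g) ≤ dNormC Ω p f + dNormC Ω p g := by
  have hp0 : 0 < p := by linarith
  simp only [dNormC_eq_iSup hp0 hΩ]
  refine iSup_le fun N => iSup₂_le fun k hk => ?_
  calc (∑ j ∈ Finset.range N, ENNReal.ofReal ‖(f + g) (k j)‖ ^ p * ENNReal.ofReal (Ω j)) ^ (1 / p)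
      ≤ (∑ j ∈ Finset.range N, (ENNReal.ofReal ‖f (k j)‖ + ENNReal.ofReal ‖g (k j)‖) ^ p *
          ENNReal.ofReal (Ω j)) ^ (1 / p) := by
        gcongr with j
        exact (ENNReal.ofReal_le_ofReal (norm_add_le _ _)).trans ENNReal.ofReal_add_le
    _ ≤ _ := weighted_Lp_add_le _ hp _ _ _
    _ ≤ _ := by
        gcongr
        · apply le_iSup_of_le N; exact le_iSup₂_of_le k hk le_rfl
        · apply le_iSup_of_le N; exact le_iSup₂_of_le k hk le_rfl

theorem dNormC_smul (hp : 0 < p) (hΩ : Antitone Ω) (f : ℕ → ℂ) (c : ℂ) :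
    dNormC Ω p (c • f) = ENNReal.ofReal ‖c‖ * dNormC Ω p f := by
  simp only [dNormC_eq_iSup hp hΩ, ENNReal.mul_iSup, Pi.smul_apply, smul_eq_mul, norm_mul,
    ENNReal.ofReal_mul (norm_nonneg c), weighted_Lp_const_mul _ hp]

end Sufficiency

lemma rpow_add_mul_sub_le_rpow {x y q : ℝ} (hx : 0 < x) (hy : 0 ≤ y) (hq : 1 ≤ q) :
    x ^ q + q * x ^ (q - 1) * (y - x) ≤ y ^ q := by
  have hb := one_add_mul_self_le_rpow_one_add (s := y / x - 1)
    (by linarith [div_nonneg hy hx.le]) hq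
  rw [add_sub_cancel, Real.div_rpow hy hx.le, le_div_iff₀ (by positivity)] at hb
  have hxq : x ^ q = x ^ (q - 1) * x := by rw [← Real.rpow_add_one hx.ne', sub_add_cancel]
  calc x ^ q + q * x ^ (q - 1) * (y - x) = (1 + q * (y / x - 1)) * x ^ q := by
        rw [hxq]; field_simp
    _ ≤ y ^ q := hb

section Necessity

open Filter Topology

variable {Ω : ℕ → ℝ} {p : ℝ}

lemma rearrSeqC_comp_equiv (σ : ℕ ≃ ℕ) (f : ℕ → ℂ) : rearrSeqC (f ∘ σ) = rearrSeqC f := by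
  rw [rearrSeqC_eq_rearr, rearrSeqC_eq_rearr]
  exact rearr_comp_equiv σ fun k => ENNReal.ofReal ‖f k‖

lemma dNormC_comp_equiv (σ : ℕ ≃ ℕ) (f : ℕ → ℂ) : dNormC Ω p (f ∘ σ) = dNormC Ω p f := by
  rw [dNormC, dNormC, rearrSeqC_comp_equiv]

lemma dNormC_ofReal_of_antitone (hp : 0 < p) (hΩ : ∀ n, 0 ≤ Ω n) {u : ℕ → ℝ} (hu : Antitone u)
    (hu0 : ∀ k, 0 ≤ u k) {N : ℕ} (hN : ∀ k, N ≤ k → u k = 0) :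
    dNormC Ω p (fun k => (u k : ℂ)) =
      ENNReal.ofReal (∑ j ∈ Finset.range N, u j ^ p * Ω j) ^ (1 / p) := by
  have hrearr : rearrSeqC (fun k => (u k : ℂ)) = fun k => ENNReal.ofReal (u k) := by
    rw [rearrSeqC_eq_rearr]
    simp only [Complex.norm_real, Real.norm_of_nonneg (hu0 _)]
    exact rearr_eq_self_of_antitone fun _ _ h => ENNReal.ofReal_le_ofReal (hu h)
  rw [dNormC, hrearr, tsum_eq_sum (s := Finset.range N) fun j hj => by
    simp [hN j (by simpa using hj), ENNReal.zero_rpow_of_pos hp]]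
  rw [ENNReal.ofReal_sum_of_nonneg fun j _ => mul_nonneg (Real.rpow_nonneg (hu0 j) p) (hΩ j)]
  refine congrArg (· ^ (1 / p)) (Finset.sum_congr rfl fun j _ => ?_)
  rw [ENNReal.ofReal_mul (Real.rpow_nonneg (hu0 j) p), ENNReal.ofReal_rpow_of_nonneg (hu0 j) hp.le]

lemma rpow_sub_mul_le_of_dNormC_add_le (hp : 0 < p) (hΩ : ∀ n, 0 ≤ Ω n)
    (htri : ∀ f g : ℕ → ℂ, dNormC Ω p (f + g) ≤ dNormC Ω p f + dNormC Ω p g) (n : ℕ) {t : ℝ}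
    (ht0 : 0 ≤ t) (ht1 : t ≤ 1) :
    ((1 + t) ^ p - (2 * t) ^ p) * Ω (n + 1) ≤ (2 ^ p - (1 + t) ^ p) * Ω n := by
  set u : ℕ → ℝ := fun k => if k ≤ n then 1 else if k = n + 1 then t else 0 with hu
  set v : ℕ → ℝ := fun k => if k < n then 2 else if k ≤ n + 1 then 1 + t else 0 with hv
  have huv : (fun k => (u k : ℂ)) + (fun k => (u k : ℂ)) ∘ Equiv.swap n (n + 1) =
      fun k => (v k : ℂ) := by
    funext k
    simp only [Pi.add_apply, Function.comp_apply, hu, hv, Equiv.swap_apply_def]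
    split_ifs <;> first | omega | (push_cast; ring)
  have hnorm_u := dNormC_ofReal_of_antitone hp hΩ (u := u) (N := n + 2)
    (antitone_nat_of_succ_le fun k => by simp only [hu]; split_ifs <;> first | omega | linarith)
    (fun k => by simp only [hu]; split_ifs <;> linarith)
    (fun k hk => by simp only [hu]; rw [if_neg (by omega), if_neg (by omega)])
  have hnorm_v := dNormC_ofReal_of_antitone hp hΩ (u := v) (N := n + 2)
    (antitone_nat_of_succ_le fun k => by simp only [hv]; split_ifs <;> first | omega | linarith)
    (fun k => by simp only [hv]; split_ifs <;> linarith)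
    (fun k hk => by simp only [hv]; rw [if_neg (by omega), if_neg (by omega)])
  have h := htri (fun k => (u k : ℂ)) ((fun k => (u k : ℂ)) ∘ Equiv.swap n (n + 1))
  rw [huv, dNormC_comp_equiv, hnorm_u, hnorm_v, ← two_mul] at h
  have hU : ∑ j ∈ Finset.range (n + 2), u j ^ p * Ω j =
      ∑ j ∈ Finset.range n, Ω j + Ω n + t ^ p * Ω (n + 1) := by
    rw [Finset.sum_range_succ, Finset.sum_range_succ]
    congr 2
    · exact Finset.sum_congr rfl fun j hj => by
        simp [hu, (Finset.mem_range.1 hj).le]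
    · simp [hu]
    · simp [hu]
  have hV : ∑ j ∈ Finset.range (n + 2), v j ^ p * Ω j =
      2 ^ p * ∑ j ∈ Finset.range n, Ω j + (1 + t) ^ p * Ω n + (1 + t) ^ p * Ω (n + 1) := by
    rw [Finset.sum_range_succ, Finset.sum_range_succ, Finset.mul_sum]
    congr 2
    · exact Finset.sum_congr rfl fun j hj => by
        simp [hv, Finset.mem_range.1 hj]
    · simp [hv]
    · simp [hv]
  have hU0 : 0 ≤ ∑ j ∈ Finset.range n, Ω j + Ω n + t ^ p * Ω (n + 1) := by
    have := Finset.sum_nonneg fun j (_ : j ∈ Finset.range n) => hΩ j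
    have := hΩ n
    have := mul_nonneg (Real.rpow_nonneg ht0 p) (hΩ (n + 1))
    linarith
  have hVU := ENNReal.rpow_le_rpow h hp.le
  rw [ENNReal.mul_rpow_of_nonneg _ _ hp.le, ← ENNReal.rpow_mul, ← ENNReal.rpow_mul,
    one_div_mul_cancel hp.ne', ENNReal.rpow_one, ENNReal.rpow_one, hU, hV,
    ← ENNReal.ofReal_ofNat 2, ENNReal.ofReal_rpow_of_nonneg zero_le_two hp.le,
    ← ENNReal.ofReal_mul (by positivity), ENNReal.ofReal_le_ofReal_iff (by positivity)] at hVU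
  rw [Real.mul_rpow zero_le_two ht0]
  linarith

theorem antitone_of_dNormC_add_le (hp : 1 ≤ p) (hΩ : ∀ n, 0 ≤ Ω n)
    (htri : ∀ f g : ℕ → ℂ, dNormC Ω p (f + g) ≤ dNormC Ω p f + dNormC Ω p g) (n : ℕ) :
    Ω (n + 1) ≤ Ω n := by
  have hp0 : 0 < p := by linarith
  have hstep : ∀ t ∈ Ioo (0 : ℝ) 1, t ^ (p - 1) * Ω (n + 1) ≤ Ω n := by
    rintro t ⟨ht0, ht1⟩
    -- Tangent lines of the convex function `x ↦ x ^ p` at `2 t` and at `2` bound the two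
    -- differences in the test inequality by multiples of `1 - t`.
    have hlow := rpow_add_mul_sub_le_rpow (y := 1 + t) (by positivity : 0 < 2 * t) (by linarith) hp
    have hhigh := rpow_add_mul_sub_le_rpow (y := 1 + t) two_pos (by linarith) hp
    have hc : 0 < p * 2 ^ (p - 1) * (1 - t) :=
      mul_pos (mul_pos hp0 (Real.rpow_pos_of_pos two_pos _)) (by linarith)
    refine le_of_mul_le_mul_left ?_ hc
    calc p * 2 ^ (p - 1) * (1 - t) * (t ^ (p - 1) * Ω (n + 1))
        = p * (2 * t) ^ (p - 1) * (1 + t - 2 * t) * Ω (n + 1) := by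
          rw [Real.mul_rpow zero_le_two ht0.le]; ring
      _ ≤ ((1 + t) ^ p - (2 * t) ^ p) * Ω (n + 1) :=
          mul_le_mul_of_nonneg_right (by linarith) (hΩ _)
      _ ≤ (2 ^ p - (1 + t) ^ p) * Ω n :=
          rpow_sub_mul_le_of_dNormC_add_le hp0 hΩ htri n ht0.le ht1.le
      _ ≤ p * 2 ^ (p - 1) * (1 - t) * Ω n := mul_le_mul_of_nonneg_right (by linarith) (hΩ _)
  have hlim : Tendsto (fun t : ℝ => t ^ (p - 1) * Ω (n + 1)) (𝓝[<] 1) (𝓝 (Ω (n + 1))) := by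
    simpa using ((Real.continuousAt_rpow_const 1 (p - 1) (Or.inl one_ne_zero)).tendsto.mono_left
      nhdsWithin_le_nhds).mul_const (Ω (n + 1))
  exact le_of_tendsto hlim (eventually_of_mem (Ioo_mem_nhdsLT zero_lt_one) hstep)

end Necessity

/-- For `1 ≤ p < ∞` and `Ω ⊆ [0,∞)`: the functional `‖·‖_{d(Ω,p)}` satisfies the triangle
inequality for all complex sequences only if `Ω` is nonincreasing; conversely, if `Ω` is
nonincreasing it is a norm (triangle inequality and homogeneity). -/
theorem stmt16 (p : ℝ) (hp : 1 ≤ p) (Ω : ℕ → ℝ) (hΩ : ∀ n, 0 ≤ Ω n) :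
    ((∀ f g : ℕ → ℂ, dNormC Ω p (f + g) ≤ dNormC Ω p f + dNormC Ω p g) →
      ∀ n : ℕ, Ω (n + 1) ≤ Ω n) ∧
    ((∀ n : ℕ, Ω (n + 1) ≤ Ω n) →
      (∀ f g : ℕ → ℂ, dNormC Ω p (f + g) ≤ dNormC Ω p f + dNormC Ω p g) ∧
      (∀ (f : ℕ → ℂ) (c : ℂ), dNormC Ω p (c • f) = ENNReal.ofReal ‖c‖ * dNormC Ω p f)) := by
  refine ⟨antitone_of_dNormC_add_le hp hΩ, fun hmono => ?_⟩
  have hanti : Antitone Ω := antitone_nat_of_succ_le hmono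
  exact ⟨dNormC_add_le hp hanti, dNormC_smul (by linarith) hanti⟩
end

section
/- Let u(x) = e^{|x|} on ℝ and w = χ_{(0,1)}, so W(t) = min(t,1). Then for every interval Q ⊂ ℝ and measurable E ⊂ Q, W(u(Q))/|Q| ≤ C · W(u(E))/|E| for an absolute constant C, where u(A) = ∫_A e^{|x|} dx. In particular this holds even though u is not a doubling weight. -/
open MeasureTheory Set
open scoped ENNReal NNReal

/-- `u(A) = ∫_A e^{|x|} dx`. -/
noncomputable def uexp (A : Set ℝ) : ℝ≥0∞ :=
  ∫⁻ x in A, ENNReal.ofReal (Real.exp |x|)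

/-!
On an interval `Q = (a, b)` at distance `d` from the origin the weight `e^{|x|}` lies between
`e^d` and `e^{d + |Q|}`. Hence `W(u(E))/|E| ≥ min(e^d, 1/|Q|)` for every `E ⊆ Q`, while
`W(u(Q))/|Q| ≤ 3 min(e^d, 1/|Q|)`: when `|Q| ≤ 1` the weight oscillates by a factor at most
`e < 3` on `Q`, and when `|Q| > 1` already `1/|Q| < 1 ≤ e^d`.
On the other hand `u((-2r, 2r)) ≥ e^{2r-1}` and `u((-r, r)) ≤ 2r e^r`, and `e^{r-1}/(2r)` is
unbounded, so `u` is not doubling.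
-/

open Real

lemma uexp_mono {s t : Set ℝ} (h : s ⊆ t) : uexp s ≤ uexp t :=
  lintegral_mono_set h

lemma ofReal_mul_volume_le_uexp {s : Set ℝ} (hs : MeasurableSet s) {m : ℝ}
    (h : ∀ x ∈ s, m ≤ exp |x|) :
    ENNReal.ofReal m * volume s ≤ uexp s := by
  rw [← setLIntegral_const s (ENNReal.ofReal m)]
  exact setLIntegral_mono' hs fun x hx => ENNReal.ofReal_le_ofReal (h x hx)

lemma uexp_le_ofReal_mul_volume {s : Set ℝ} (hs : MeasurableSet s) {M : ℝ}
    (h : ∀ x ∈ s, exp |x| ≤ M) :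
    uexp s ≤ ENNReal.ofReal M * volume s := by
  rw [← setLIntegral_const s (ENNReal.ofReal M)]
  exact setLIntegral_mono' hs fun x hx => ENNReal.ofReal_le_ofReal (h x hx)

/-- The distance from `0` to the interval `(a, b)`. -/
def distOriginIoo (a b : ℝ) : ℝ := max 0 (max a (-b))

lemma distOriginIoo_nonneg (a b : ℝ) : 0 ≤ distOriginIoo a b := le_max_left _ _

lemma distOriginIoo_le_abs {a b x : ℝ} (hx : x ∈ Ioo a b) : distOriginIoo a b ≤ |x| :=
  max_le (abs_nonneg x)
    (max_le (hx.1.le.trans (le_abs_self x)) ((neg_le_neg hx.2.le).trans (neg_le_abs x)))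

lemma abs_le_distOriginIoo_add {a b x : ℝ} (hx : x ∈ Ioo a b) :
    |x| ≤ distOriginIoo a b + (b - a) := by
  have hda : a ≤ distOriginIoo a b := (le_max_left _ _).trans (le_max_right _ _)
  have hdb : -b ≤ distOriginIoo a b := (le_max_right _ _).trans (le_max_right _ _)
  rw [abs_le]
  constructor <;> linarith [hx.1, hx.2]

lemma min_exp_distOriginIoo_le {a b : ℝ} {E : Set ℝ} (hEQ : E ⊆ Ioo a b)
    (hE : MeasurableSet E) (hE0 : volume E ≠ 0) :
    min (ENNReal.ofReal (exp (distOriginIoo a b))) (1 / volume (Ioo a b)) ≤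
      min (uexp E) 1 / volume E := by
  have hEQvol : volume E ≤ volume (Ioo a b) := measure_mono hEQ
  have hEtop : volume E ≠ ∞ := ne_top_of_le_ne_top measure_Ioo_lt_top.ne hEQvol
  rw [ENNReal.le_div_iff_mul_le (Or.inl hE0) (Or.inl hEtop)]
  refine le_min ?_ ?_
  · calc _ ≤ ENNReal.ofReal (exp (distOriginIoo a b)) * volume E := by
          gcongr; exact min_le_left _ _
      _ ≤ uexp E := ofReal_mul_volume_le_uexp hE fun x hx =>
          exp_le_exp.mpr (distOriginIoo_le_abs (hEQ hx))
  · calc _ ≤ 1 / volume (Ioo a b) * volume E := by gcongr; exact min_le_right _ _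
      _ ≤ 1 := by
          rw [one_div, ENNReal.inv_mul_le_iff ((pos_iff_ne_zero.mpr hE0).trans_le hEQvol).ne'
            measure_Ioo_lt_top.ne]
          simpa using hEQvol

lemma min_uexp_Ioo_div_volume_le (a b : ℝ) :
    min (uexp (Ioo a b)) 1 / volume (Ioo a b) ≤
      3 * ENNReal.ofReal (exp (distOriginIoo a b)) := by
  set d := distOriginIoo a b
  have hvol : volume (Ioo a b) = ENNReal.ofReal (b - a) := Real.volume_Ioo
  rcases le_or_gt (b - a) 1 with hba | hba
  · have hosc : exp (d + (b - a)) ≤ 3 * exp d := by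
      rw [exp_add, mul_comm]
      gcongr
      exact (exp_le_exp.mpr hba).trans exp_one_lt_three.le
    apply ENNReal.div_le_of_le_mul
    calc min (uexp (Ioo a b)) 1 ≤ uexp (Ioo a b) := min_le_left _ _
      _ ≤ ENNReal.ofReal (exp (d + (b - a))) * volume (Ioo a b) :=
          uexp_le_ofReal_mul_volume measurableSet_Ioo fun x hx =>
            exp_le_exp.mpr (abs_le_distOriginIoo_add hx)
      _ ≤ 3 * ENNReal.ofReal (exp d) * volume (Ioo a b) := by
          gcongr
          rw [← ENNReal.ofReal_ofNat 3, ← ENNReal.ofReal_mul (by norm_num)]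
          exact ENNReal.ofReal_le_ofReal hosc
  · have hexp : (1 : ℝ≥0∞) ≤ ENNReal.ofReal (exp d) := by
      simpa using one_le_exp (distOriginIoo_nonneg a b)
    calc min (uexp (Ioo a b)) 1 / volume (Ioo a b) ≤ 1 / 1 := by
          gcongr
          · exact min_le_right _ _
          · rw [hvol]; simpa using hba.le
      _ ≤ 3 * ENNReal.ofReal (exp d) := by
          rw [div_one, ← one_mul 1]; gcongr; norm_num

theorem min_uexp_Ioo_div_volume_le_three_mul {a b : ℝ} {E : Set ℝ} (hEQ : E ⊆ Ioo a b)
    (hE : MeasurableSet E) (hE0 : volume E ≠ 0) :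
    min (uexp (Ioo a b)) 1 / volume (Ioo a b) ≤ 3 * (min (uexp E) 1 / volume E) := by
  refine le_trans ?_ (mul_le_mul_right (min_exp_distOriginIoo_le hEQ hE hE0) 3)
  rcases min_choice (ENNReal.ofReal (exp (distOriginIoo a b))) (1 / volume (Ioo a b))
    with h | h <;> rw [h]
  · exact min_uexp_Ioo_div_volume_le a b
  · calc _ ≤ 1 / volume (Ioo a b) := by gcongr; exact min_le_right _ _
      _ ≤ 3 * (1 / volume (Ioo a b)) := le_mul_of_one_le_left zero_le (by norm_num)

lemma exp_sub_one_le_uexp_Ioo_neg {r : ℝ} (hr : 1 / 2 ≤ r) :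
    ENNReal.ofReal (exp (r - 1)) ≤ uexp (Ioo (-r) r) := by
  have hunit : volume (Ioo (r - 1) r) = 1 := by simp [Real.volume_Ioo]
  calc ENNReal.ofReal (exp (r - 1))
        = ENNReal.ofReal (exp (r - 1)) * volume (Ioo (r - 1) r) := by rw [hunit, mul_one]
    _ ≤ uexp (Ioo (r - 1) r) := ofReal_mul_volume_le_uexp measurableSet_Ioo fun x hx =>
        exp_le_exp.mpr (hx.1.le.trans (le_abs_self x))
    _ ≤ uexp (Ioo (-r) r) := uexp_mono (Ioo_subset_Ioo (by linarith) le_rfl)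

lemma uexp_Ioo_neg_le (r : ℝ) : uexp (Ioo (-r) r) ≤ ENNReal.ofReal (exp r * (2 * r)) := by
  calc uexp (Ioo (-r) r) ≤ ENNReal.ofReal (exp r) * volume (Ioo (-r) r) :=
        uexp_le_ofReal_mul_volume measurableSet_Ioo fun x hx =>
          exp_le_exp.mpr (abs_le.mpr ⟨hx.1.le, hx.2.le⟩)
    _ = ENNReal.ofReal (exp r * (2 * r)) := by
        rw [Real.volume_Ioo, ENNReal.ofReal_mul (exp_pos r).le]
        ring_nf

lemma exists_mul_lt_exp_sub_one {C : ℝ} (hC : 0 ≤ C) : ∃ r, 1 ≤ r ∧ C * r < exp (r - 1) := by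
  refine ⟨2 * C + 3, by linarith, ?_⟩
  have := quadratic_le_exp_of_nonneg (x := 2 * C + 2) (by linarith)
  rw [show 2 * C + 3 - 1 = 2 * C + 2 by ring]
  nlinarith

theorem uexp_not_doubling :
    ¬ ∃ C : ℝ≥0, ∀ c r : ℝ, 0 < r →
      uexp (Ioo (c - 2 * r) (c + 2 * r)) ≤ C * uexp (Ioo (c - r) (c + r)) := by
  rintro ⟨C, hC⟩
  obtain ⟨r, hr1, hr⟩ := exists_mul_lt_exp_sub_one (by positivity : (0 : ℝ) ≤ 2 * C)
  have hdoubling := hC 0 r (by linarith)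
  simp only [zero_sub, zero_add] at hdoubling
  have hbound :
      ENNReal.ofReal (exp (2 * r - 1)) ≤ ENNReal.ofReal (C * (exp r * (2 * r))) :=
    calc ENNReal.ofReal (exp (2 * r - 1)) ≤ uexp (Ioo (-(2 * r)) (2 * r)) :=
          exp_sub_one_le_uexp_Ioo_neg (by linarith)
      _ ≤ C * uexp (Ioo (-r) r) := hdoubling
      _ ≤ C * ENNReal.ofReal (exp r * (2 * r)) := by gcongr; exact uexp_Ioo_neg_le r
      _ = ENNReal.ofReal (C * (exp r * (2 * r))) := by
          rw [ENNReal.ofReal_mul C.coe_nonneg, ENNReal.ofReal_coe_nnreal]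
  rw [ENNReal.ofReal_le_ofReal_iff (by positivity)] at hbound
  have hsplit : exp (2 * r - 1) = exp r * exp (r - 1) := by rw [← exp_add]; ring_nf
  nlinarith [mul_lt_mul_of_pos_left hr (exp_pos r)]

/-- For `u(x) = e^{|x|}` on `ℝ` and `W(t) = min(t,1)` (coming from `w = χ_{(0,1)}`):
`W(u(Q))/|Q| ≤ C W(u(E))/|E|` for every interval `Q` and measurable `E ⊆ Q`, with an
absolute constant `C` — even though `u` is not a doubling weight. -/
theorem stmt17 :
    (∃ C : ℝ≥0, ∀ a b : ℝ, a < b → ∀ E : Set ℝ, E ⊆ Set.Ioo a b → MeasurableSet E →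
      volume E ≠ 0 →
      min (uexp (Set.Ioo a b)) 1 / volume (Set.Ioo a b) ≤
        C * (min (uexp E) 1 / volume E)) ∧
    ¬ (∃ C : ℝ≥0, ∀ c r : ℝ, 0 < r →
      uexp (Set.Ioo (c - 2 * r) (c + 2 * r)) ≤ C * uexp (Set.Ioo (c - r) (c + r))) :=
  ⟨⟨3, fun _ _ _ _ hEQ hE hE0 => by
      exact_mod_cast min_uexp_Ioo_div_volume_le_three_mul hEQ hE hE0⟩, uexp_not_doubling⟩
end
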